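/- arXiv:0909.5683 — 3 statements merged into one kernel-verified Lean document; each statement's English description precedes it below -/
import Mathlib

section
/- Let P be a d-independent property of F. Then for every real multivariate polynomial p in the variables indexed by D × R of total degree at most d, the average of p(δ_f) over f ∈ P⁻¹(1) equals the average of p(δ_f) over f ∈ P⁻¹(0); that is, (1/|P⁻¹(1)|)·Σ_{f∈P⁻¹(1)} p(δ_f) = (1/|P⁻¹(0)|)·Σ_{f∈P⁻¹(0)} p(δ_f). -/
/-!
Evaluated at `δ_f`, a monomial with support `S` is the indicator of the event that `f` agrees
with `S` on every pair `(x, y) ∈ S`. When `deg p ≤ d` each such `S` has at most `d` points, so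
padding `S` to a `d`-tuple turns `d`-independence into independence of that event from `P`.
Hence the average of `p(δ_f)` over each class of `P` equals its average over all of `F`.
-/

open Finset MvPolynomial

theorem Finset.Nonempty.exists_range_eq_of_card_le {α : Type*} {s : Finset α}
    (hs : s.Nonempty) {d : ℕ} (hd : #s ≤ d) : ∃ z : Fin d → α, Set.range z = s := by
  have : Nonempty s := hs.to_subtype
  obtain ⟨g, hg⟩ : ∃ g : Fin d → s, Function.Surjective g :=
    Function.exists_surjective_iff.2
      ⟨inferInstance, Function.Embedding.nonempty_of_card_le (by simpa using hd)⟩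
  exact ⟨Subtype.val ∘ g, by rw [Set.range_comp, hg.range_eq, Set.image_univ, Subtype.range_coe]⟩

theorem Finsupp.card_support_le_sum {σ : Type*} (m : σ →₀ ℕ) :
    #m.support ≤ m.sum fun _ e => e := by
  simpa [Finsupp.sum] using
    card_nsmul_le_sum m.support m 1 fun _ hi => Nat.one_le_iff_ne_zero.2 (m.mem_support_iff.1 hi)

theorem MvPolynomial.card_support_le_totalDegree {σ R : Type*} [CommSemiring R]
    {p : MvPolynomial σ R} {m : σ →₀ ℕ} (hm : m ∈ p.support) : #m.support ≤ p.totalDegree :=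
  m.card_support_le_sum.trans (le_totalDegree hm)

section Independence

variable {D R β : Type*} [DecidableEq R] [DecidableEq β]

def graphIndicator (f : D → R) (xy : D × R) : ℝ := if f xy.1 = xy.2 then 1 else 0

def IsIndependent (F : Finset (D → R)) (P : (D → R) → β) (d : ℕ) : Prop :=
  ∀ (z : Fin d → D) (y : Fin d → R) (b : β),
    #{f ∈ F | P f = b ∧ ∀ j, f (z j) = y j} * #F =
      #{f ∈ F | ∀ j, f (z j) = y j} * #{f ∈ F | P f = b}

theorem IsIndependent.card_filter_agree_mul_card {F : Finset (D → R)} {P : (D → R) → β} {d : ℕ}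
    (hP : IsIndependent F P d) {S : Finset (D × R)} (hS : #S ≤ d) (b : β) :
    #{f ∈ F | P f = b ∧ ∀ xy ∈ S, f xy.1 = xy.2} * #F =
      #{f ∈ F | ∀ xy ∈ S, f xy.1 = xy.2} * #{f ∈ F | P f = b} := by
  obtain rfl | hne := S.eq_empty_or_nonempty
  · simp [mul_comm]
  obtain ⟨z, hz⟩ := hne.exists_range_eq_of_card_le hS
  have hagree (f : D → R) : (∀ xy ∈ S, f xy.1 = xy.2) ↔ ∀ j, f (z j).1 = (z j).2 := by
    rw [← Set.forall_mem_range (p := fun xy : D × R => f xy.1 = xy.2), hz]; rfl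
  simpa only [hagree] using hP (fun j => (z j).1) (fun j => (z j).2) b

theorem prod_graphIndicator_pow (f : D → R) (m : D × R →₀ ℕ) :
    ∏ xy ∈ m.support, graphIndicator f xy ^ m xy =
      if ∀ xy ∈ m.support, f xy.1 = xy.2 then 1 else 0 := by
  rw [← prod_boole]
  refine prod_congr rfl fun xy hxy => ?_
  rw [graphIndicator, ite_pow, one_pow, zero_pow (m.mem_support_iff.1 hxy)]

theorem sum_eval_graphIndicator (G : Finset (D → R)) (p : MvPolynomial (D × R) ℝ) :
    ∑ f ∈ G, eval (graphIndicator f) p =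
      ∑ m ∈ p.support, coeff m p * #{f ∈ G | ∀ xy ∈ m.support, f xy.1 = xy.2} := by
  simp only [eval_eq, prod_graphIndicator_pow]
  rw [sum_comm]
  refine sum_congr rfl fun m _ => ?_
  rw [← mul_sum, sum_boole]

theorem IsIndependent.sum_eval_mul_card {F : Finset (D → R)} {P : (D → R) → β} {d : ℕ}
    (hP : IsIndependent F P d) {p : MvPolynomial (D × R) ℝ} (hp : p.totalDegree ≤ d) (b : β) :
    (∑ f ∈ F with P f = b, eval (graphIndicator f) p) * #F =
      (∑ f ∈ F, eval (graphIndicator f) p) * #{f ∈ F | P f = b} := by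
  simp only [sum_eval_graphIndicator, filter_filter, sum_mul]
  refine sum_congr rfl fun m hm => ?_
  have := hP.card_filter_agree_mul_card ((card_support_le_totalDegree hm).trans hp) b
  rw [mul_assoc, mul_assoc, ← Nat.cast_mul, this, Nat.cast_mul]

theorem IsIndependent.average_eq {F : Finset (D → R)} {P : (D → R) → β} {d : ℕ}
    (hP : IsIndependent F P d) {p : MvPolynomial (D × R) ℝ} (hp : p.totalDegree ≤ d) {b : β}
    (hb : {f ∈ F | P f = b}.Nonempty) :
    1 / (#{f ∈ F | P f = b} : ℝ) * ∑ f ∈ F with P f = b, eval (graphIndicator f) p =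
      1 / (#F : ℝ) * ∑ f ∈ F, eval (graphIndicator f) p := by
  have hb₀ : (#{f ∈ F | P f = b} : ℝ) ≠ 0 := by exact_mod_cast hb.card_pos.ne'
  have hF₀ : (#F : ℝ) ≠ 0 := by exact_mod_cast (hb.mono (filter_subset _ F)).card_pos.ne'
  rw [div_mul_eq_mul_div, div_mul_eq_mul_div, one_mul, one_mul, div_eq_div_iff hb₀ hF₀]
  exact hP.sum_eval_mul_card hp b

end Independence

theorem stmt0_general {D R : Type} [DecidableEq R]
    (F : Finset (D → R))
    (P : (D → R) → Fin 2) (d : ℕ)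
    (hP0 : (F.filter (fun f => P f = 0)).Nonempty)
    (hP1 : (F.filter (fun f => P f = 1)).Nonempty)
    (hInd : ∀ (z : Fin d → D) (y : Fin d → R) (b : Fin 2),
      (F.filter (fun f => P f = b ∧ ∀ j, f (z j) = y j)).card * F.card =
        (F.filter (fun f => ∀ j, f (z j) = y j)).card *
          (F.filter (fun f => P f = b)).card)
    (p : MvPolynomial (D × R) ℝ) (hdeg : p.totalDegree ≤ d) :
    (1 / ((F.filter (fun f => P f = 1)).card : ℝ)) *
        ∑ f ∈ F.filter (fun f => P f = 1),
          MvPolynomial.eval (fun xy => if f xy.1 = xy.2 then (1 : ℝ) else 0) p =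
    (1 / ((F.filter (fun f => P f = 0)).card : ℝ)) *
        ∑ f ∈ F.filter (fun f => P f = 0),
          MvPolynomial.eval (fun xy => if f xy.1 = xy.2 then (1 : ℝ) else 0) p :=
  (IsIndependent.average_eq hInd hdeg hP1).trans (IsIndependent.average_eq hInd hdeg hP0).symm

/-- For a `d`-independent property `P` of a nonempty finite family `F` of
functions `D → R` (with `P` attaining both values), every real multivariate polynomial `p`
in variables indexed by `D × R` of total degree at most `d` has the same average of
`p(δ_f)` over `f ∈ P⁻¹ 1` as over `f ∈ P⁻¹ 0`. -/
theorem stmt0 {D R : Type} [Fintype D] [Fintype R] [DecidableEq D] [DecidableEq R]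
    [Nonempty D] [Nonempty R]
    (F : Finset (D → R)) (hF : F.Nonempty)
    (P : (D → R) → Fin 2) (d : ℕ)
    (hP0 : (F.filter (fun f => P f = 0)).Nonempty)
    (hP1 : (F.filter (fun f => P f = 1)).Nonempty)
    (hInd : ∀ (z : Fin d → D) (y : Fin d → R) (b : Fin 2),
      (F.filter (fun f => P f = b ∧ ∀ j, f (z j) = y j)).card * F.card =
        (F.filter (fun f => ∀ j, f (z j) = y j)).card *
          (F.filter (fun f => P f = b)).card)
    (p : MvPolynomial (D × R) ℝ) (hdeg : p.totalDegree ≤ d) :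
    (1 / ((F.filter (fun f => P f = 1)).card : ℝ)) *
        ∑ f ∈ F.filter (fun f => P f = 1),
          MvPolynomial.eval (fun xy => if f xy.1 = xy.2 then (1 : ℝ) else 0) p =
    (1 / ((F.filter (fun f => P f = 0)).card : ℝ)) *
        ∑ f ∈ F.filter (fun f => P f = 0),
          MvPolynomial.eval (fun xy => if f xy.1 = xy.2 then (1 : ℝ) else 0) p :=
  stmt0_general F P d hP0 hP1 hInd p hdeg
end

section
/- Let M, M' ≥ 1 be integers and 0 < ε ≤ 1/2. Let Q be a real polynomial in two variables such that 0 ≤ Q(α, β) ≤ 1 for all integers α, β with 0 ≤ α ≤ M and 0 ≤ β ≤ M', and suppose Q(1,0) ≤ 1/2 − ε and Q(0,1) ≥ 1/2 + ε. Then there exists a real polynomial q̂ in one variable, of degree at most the total degree of Q, such that 0 ≤ q̂(i) ≤ 1 for all integers i with 0 ≤ i ≤ min(M, M'), and |q̂(1) − q̂(0)| ≥ ε. -/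
/-!
Restricting `Q` to a line `t ↦ a + t • v` substitutes polynomials of degree at most one for the
variables, so it does not raise the degree. Whichever side of `1/2` the value `Q(0,0)` lies on,
one of the two coordinate axes gives a restriction whose values at `0` and `1` are at least `ε`
apart, while its values at the integer points stay those of `Q` on the grid.
-/

open Polynomial

namespace MvPolynomial

variable {R σ : Type*} [CommSemiring R]

noncomputable def restrictLine (Q : MvPolynomial σ R) (a v : σ → R) : R[X] :=
  aeval (fun i => Polynomial.C (v i) * Polynomial.X + Polynomial.C (a i)) Q

@[simp]
theorem eval_restrictLine (Q : MvPolynomial σ R) (a v : σ → R) (t : R) :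
    (Q.restrictLine a v).eval t = eval (a + t • v) Q := by
  rw [restrictLine, aeval_def, polynomial_eval_eval₂]
  congr 1
  · ext r; simp
  · ext i; simp [add_comm, mul_comm (v i)]

theorem natDegree_restrictLine_le (Q : MvPolynomial σ R) (a v : σ → R) :
    (Q.restrictLine a v).natDegree ≤ Q.totalDegree := by
  unfold restrictLine
  simpa using Q.aeval_natDegree_le le_rfl _ fun _ => natDegree_linear_le

end MvPolynomial

open MvPolynomial

theorem stmt7_general (M M' : ℕ)
    (ε : ℝ)
    (Q : MvPolynomial (Fin 2) ℝ)
    (hbd : ∀ α β : ℕ, α ≤ M → β ≤ M' →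
      0 ≤ MvPolynomial.eval (fun i => if i = 0 then (α : ℝ) else (β : ℝ)) Q ∧
        MvPolynomial.eval (fun i => if i = 0 then (α : ℝ) else (β : ℝ)) Q ≤ 1)
    (h10 : MvPolynomial.eval (fun i => if i = 0 then (1 : ℝ) else 0) Q ≤ 1 / 2 - ε)
    (h01 : 1 / 2 + ε ≤ MvPolynomial.eval (fun i => if i = 0 then (0 : ℝ) else 1) Q) :
    ∃ qhat : Polynomial ℝ,
      qhat.natDegree ≤ Q.totalDegree ∧
      (∀ i : ℕ, i ≤ min M M' →
        0 ≤ qhat.eval (i : ℝ) ∧ qhat.eval (i : ℝ) ≤ 1) ∧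
      ε ≤ |qhat.eval 1 - qhat.eval 0| := by
  have x_axis (t : ℝ) : (0 : Fin 2 → ℝ) + t • ![1, 0] = fun i => if i = 0 then t else 0 := by
    ext i; fin_cases i <;> simp
  have y_axis (t : ℝ) : (0 : Fin 2 → ℝ) + t • ![0, 1] = fun i => if i = 0 then 0 else t := by
    ext i; fin_cases i <;> simp
  rcases le_total (1 / 2) (eval (fun i => if i = 0 then (0 : ℝ) else 0) Q) with h00 | h00
  · refine ⟨Q.restrictLine 0 ![1, 0], Q.natDegree_restrictLine_le _ _, fun i hi => ?_, ?_⟩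
    · rw [eval_restrictLine, x_axis]
      simpa using hbd i 0 (hi.trans (min_le_left _ _)) M'.zero_le
    · rw [eval_restrictLine, eval_restrictLine, x_axis, x_axis]
      exact le_abs.mpr (.inr (by linarith))
  · refine ⟨Q.restrictLine 0 ![0, 1], Q.natDegree_restrictLine_le _ _, fun i hi => ?_, ?_⟩
    · rw [eval_restrictLine, y_axis]
      simpa using hbd 0 i M.zero_le (hi.trans (min_le_right _ _))
    · rw [eval_restrictLine, eval_restrictLine, y_axis, y_axis]
      exact le_abs.mpr (.inl (by linarith))

/-- Let `M, M' ≥ 1` and `0 < ε ≤ 1/2`. If `Q` is a real polynomial in two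
variables with `0 ≤ Q(α,β) ≤ 1` for all integers `0 ≤ α ≤ M`, `0 ≤ β ≤ M'`, and
`Q(1,0) ≤ 1/2 − ε`, `Q(0,1) ≥ 1/2 + ε`, then there is a real univariate polynomial
`q̂`, of degree at most the total degree of `Q`, with `0 ≤ q̂(i) ≤ 1` for all integers
`0 ≤ i ≤ min M M'` and `|q̂(1) − q̂(0)| ≥ ε`. -/
theorem stmt7 (M M' : ℕ) (hM : 1 ≤ M) (hM' : 1 ≤ M')
    (ε : ℝ) (hε0 : 0 < ε) (hε1 : ε ≤ 1 / 2)
    (Q : MvPolynomial (Fin 2) ℝ)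
    (hbd : ∀ α β : ℕ, α ≤ M → β ≤ M' →
      0 ≤ MvPolynomial.eval (fun i => if i = 0 then (α : ℝ) else (β : ℝ)) Q ∧
        MvPolynomial.eval (fun i => if i = 0 then (α : ℝ) else (β : ℝ)) Q ≤ 1)
    (h10 : MvPolynomial.eval (fun i => if i = 0 then (1 : ℝ) else 0) Q ≤ 1 / 2 - ε)
    (h01 : 1 / 2 + ε ≤ MvPolynomial.eval (fun i => if i = 0 then (0 : ℝ) else 1) Q) :
    ∃ qhat : Polynomial ℝ,
      qhat.natDegree ≤ Q.totalDegree ∧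
      (∀ i : ℕ, i ≤ min M M' →
        0 ≤ qhat.eval (i : ℝ) ∧ qhat.eval (i : ℝ) ≤ 1) ∧
      ε ≤ |qhat.eval 1 - qhat.eval 0| :=
  stmt7_general M M' ε Q hbd h10 h01
end

section
/- For every ε > 0 there is a constant c > 0 (depending only on ε) such that for every integer N ≥ 1 the following holds: if q̂ is a real polynomial in one variable with 0 ≤ q̂(i) ≤ 1 for every integer i with 0 ≤ i ≤ N, and |q̂(1) − q̂(0)| ≥ ε, then the degree of q̂ is at least c·√N. -/
/-!
Interpolate `p`, of degree `d`, at the quadratically spaced nodes `m i²` (`0 ≤ i ≤ d`) with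
`m = ⌊N / d²⌋`, all of which lie in `[0, N]`. The `j`-th Lagrange basis polynomial satisfies
`|ℓ_j(1)| ≤ 2 / (m j²)`, so writing `p(1) - p(0) = ∑_j (p(m j²) - p(0)) ℓ_j(1)` with
`|p(m j²) - p(0)| ≤ 1` gives `|p(1) - p(0)| ≤ (2 / m) ∑_j 1 / j² ≤ 4 / m`. A gap `ε` thus
forces `m ≤ 4 / ε`, that is `N < (1 + 4 / ε) d²`.
-/

open Finset Polynomial
open scoped Nat

theorem Nat.factorial_mul_factorial_le_factorial_add_mul_factorial_sub {d j : ℕ} (hj : j ≤ d) :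
    d ! * d ! ≤ (d + j)! * (d - j)! := by
  have hmid : (2 * d).choose (d + j) ≤ (2 * d).choose d := by
    simpa using Nat.choose_le_middle (d + j) (2 * d)
  have hj' := Nat.choose_mul_factorial_mul_factorial (show d + j ≤ 2 * d by omega)
  have h0 := Nat.choose_mul_factorial_mul_factorial (show d ≤ 2 * d by omega)
  rw [show 2 * d - (d + j) = d - j by omega] at hj'
  rw [show 2 * d - d = d by omega] at h0
  refine Nat.le_of_mul_le_mul_left ?_ (Nat.choose_pos (show d ≤ 2 * d by omega))
  calc (2 * d).choose d * (d ! * d !) = (2 * d).choose (d + j) * ((d + j)! * (d - j)!) := by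
        rw [← mul_assoc, h0, ← mul_assoc, hj']
    _ ≤ _ := Nat.mul_le_mul_right _ hmid

theorem Nat.prod_Icc_one_eq_factorial (d : ℕ) : ∏ i ∈ Icc 1 d, i = d ! :=
  Finset.prod_Ico_id_eq_factorial d

theorem Nat.factorial_mul_prod_Icc_one_add (d j : ℕ) :
    j ! * ∏ i ∈ Icc 1 d, (i + j) = (d + j)! := by
  induction d with
  | zero => simp
  | succ d ih =>
    rw [prod_Icc_succ_top (by omega), ← mul_assoc, ih, show d + 1 + j = d + j + 1 by omega,
      Nat.factorial_succ, mul_comm]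

theorem Nat.prod_erase_Icc_one_dist {d j : ℕ} (hj : j ∈ Icc 1 d) :
    ∏ i ∈ (Icc 1 d).erase j, Nat.dist i j = (j - 1)! * (d - j)! := by
  rw [mem_Icc] at hj
  have hsplit : (Icc 1 d).erase j = Ico 1 j ∪ Ioc j d := by
    ext i; simp only [mem_erase, mem_Icc, mem_union, mem_Ico, mem_Ioc]; omega
  have hdisj : Disjoint (Ico 1 j) (Ioc j d) :=
    disjoint_left.2 fun i h h' => by simp only [mem_Ico, mem_Ioc] at h h'; omega
  rw [hsplit, prod_union hdisj, ← Nat.prod_Icc_one_eq_factorial,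
    ← Nat.prod_Icc_one_eq_factorial]
  congr 1
  · exact prod_nbij' (j - ·) (j - ·) (by intro i; simp; omega) (by intro i; simp; omega)
      (by intro i; simp; omega) (by intro i; simp; omega)
      fun i hi => Nat.dist_eq_sub_of_le (mem_Ico.1 hi).2.le
  · exact prod_nbij' (· - j) (· + j) (by intro i; simp; omega) (by intro i; simp; omega)
      (by intro i; simp; omega) (by intro i; simp)
      fun i hi => Nat.dist_eq_sub_of_le_right (mem_Ioc.1 hi).1.le

-- The quotient of the two sides is `(d!)² / ((d + j)! (d - j)!) = C(2d, d + j) / C(2d, d)`.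
theorem Nat.prod_erase_Icc_one_sq_le_two_mul {d j : ℕ} (hj : j ∈ Icc 1 d) :
    ∏ i ∈ (Icc 1 d).erase j, i ^ 2 ≤
      2 * ∏ i ∈ (Icc 1 d).erase j, (i + j) * Nat.dist i j := by
  have hid : j * ∏ i ∈ (Icc 1 d).erase j, i = d ! := by
    rw [mul_prod_erase _ (fun i => i) hj, Nat.prod_Icc_one_eq_factorial]
  have hadd : j ! * ((j + j) * ∏ i ∈ (Icc 1 d).erase j, (i + j)) = (d + j)! := by
    rw [mul_prod_erase _ (· + j) hj, Nat.factorial_mul_prod_Icc_one_add]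
  have hdist := Nat.prod_erase_Icc_one_dist hj
  obtain ⟨hj0, hjd⟩ := mem_Icc.1 hj
  have hj1 : j * (j - 1)! = j ! := Nat.mul_factorial_pred (by omega)
  refine Nat.le_of_mul_le_mul_left ?_ (by positivity : 0 < j * j * j !)
  calc j * j * j ! * ∏ i ∈ (Icc 1 d).erase j, i ^ 2 = j ! * (d ! * d !) := by
        rw [prod_pow, ← hid]; ring
    _ ≤ j ! * ((d + j)! * (d - j)!) :=
        Nat.mul_le_mul_left _ (Nat.factorial_mul_factorial_le_factorial_add_mul_factorial_sub hjd)
    _ = j * j * j ! * (2 * ∏ i ∈ (Icc 1 d).erase j, (i + j) * Nat.dist i j) := by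
        rw [← hadd, prod_mul_distrib, hdist, ← hj1]; ring

theorem Lagrange.eval_basis {F ι : Type*} [Field F] [DecidableEq ι] (s : Finset ι) (v : ι → F)
    (i : ι) (x : F) :
    (Lagrange.basis s v i).eval x = ∏ j ∈ s.erase i, (x - v j) / (v i - v j) := by
  simp [Lagrange.basis, Lagrange.basisDivisor, eval_prod, div_eq_inv_mul]

theorem Lagrange.eval_sub_eq_sum {F ι : Type*} [Field F] [DecidableEq ι] {s : Finset ι}
    {v : ι → F} {p : F[X]} (hvs : Set.InjOn v s) (hs : s.Nonempty) (hdeg : p.degree < #s)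
    (x c : F) :
    p.eval x - c = ∑ i ∈ s, (p.eval (v i) - c) * (Lagrange.basis s v i).eval x := by
  have hone : ∑ i ∈ s, (Lagrange.basis s v i).eval x = 1 := by
    rw [← eval_finsetSum, Lagrange.sum_basis hvs hs, eval_one]
  conv_lhs => rw [Lagrange.eq_interpolate hvs hdeg, Lagrange.interpolate_apply]
  simp only [eval_finsetSum, eval_mul, eval_C, sub_mul, sum_sub_distrib, ← mul_sum, hone, mul_one]

theorem Nat.abs_cast_sub_cast_eq_dist {a b : ℕ} : |(a : ℝ) - b| = Nat.dist a b := by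
  rcases le_total a b with h | h
  · rw [Nat.dist_eq_sub_of_le h, abs_sub_comm, abs_of_nonneg (by simpa using h), Nat.cast_sub h]
  · rw [Nat.dist_eq_sub_of_le_right h, abs_of_nonneg (by simpa using h), Nat.cast_sub h]

theorem abs_one_sub_div_sq_nodes_le {m i j : ℕ} (hm : 1 ≤ m) (hi : 1 ≤ i) (hij : i ≠ j) :
    |1 - m * (i : ℝ) ^ 2| / |m * (j : ℝ) ^ 2 - m * (i : ℝ) ^ 2| ≤
      ((i ^ 2 : ℕ) : ℝ) / (((i + j) * Nat.dist i j : ℕ) : ℝ) := by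
  have hm' : (1 : ℝ) ≤ m := by exact_mod_cast hm
  have hi' : (1 : ℝ) ≤ i ^ 2 := by exact_mod_cast Nat.one_le_pow _ _ hi
  have hnum : |1 - m * (i : ℝ) ^ 2| ≤ m * (i : ℝ) ^ 2 := by
    rw [abs_sub_comm, abs_of_nonneg (by nlinarith)]; linarith
  have hden :
      |m * (j : ℝ) ^ 2 - m * (i : ℝ) ^ 2| = m * (((i + j) * Nat.dist i j : ℕ) : ℝ) := by
    rw [show m * (j : ℝ) ^ 2 - m * (i : ℝ) ^ 2 = m * (i + j) * (j - i) by ring, abs_mul,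
      abs_sub_comm, Nat.abs_cast_sub_cast_eq_dist, abs_of_nonneg (by positivity)]
    push_cast; ring
  have hpos : (0 : ℝ) < (((i + j) * Nat.dist i j : ℕ) : ℝ) := by
    have := Nat.dist_pos_of_ne hij; positivity
  rw [hden, div_le_div_iff₀ (by positivity) hpos]
  have := mul_le_mul_of_nonneg_right hnum hpos.le
  push_cast at this ⊢
  linarith

theorem abs_eval_one_basis_sq_nodes_le {d m j : ℕ} (hm : 1 ≤ m) (hj : j ∈ Icc 1 d) :
    |(Lagrange.basis (range (d + 1)) (fun i : ℕ => (m : ℝ) * i ^ 2) j).eval 1| ≤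
      2 / (m * j ^ 2) := by
  set E := (Icc 1 d).erase j
  obtain ⟨hj1, hjd⟩ := mem_Icc.1 hj
  have hsplit : (range (d + 1)).erase j = insert 0 E := by
    ext i; simp only [E, mem_erase, mem_range, mem_insert, mem_Icc]; omega
  have hD : ∀ i ∈ E, 0 < (i + j) * Nat.dist i j := fun i hi =>
    Nat.mul_pos (by omega) (Nat.dist_pos_of_ne (ne_of_mem_erase hi))
  have hprod :
      ∏ i ∈ E, |1 - m * (i : ℝ) ^ 2| / |m * (j : ℝ) ^ 2 - m * (i : ℝ) ^ 2| ≤ 2 := by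
    calc _ ≤ ∏ i ∈ E, ((i ^ 2 : ℕ) : ℝ) / (((i + j) * Nat.dist i j : ℕ) : ℝ) := by
          refine prod_le_prod (fun _ _ => by positivity) fun i hi => ?_
          obtain ⟨hij, hi1, -⟩ : i ≠ j ∧ 1 ≤ i ∧ i ≤ d := by simpa [E] using hi
          exact abs_one_sub_div_sq_nodes_le hm hi1 hij
      _ ≤ 2 := by
        rw [prod_div_distrib, ← Nat.cast_prod, ← Nat.cast_prod, div_le_iff₀]
        · exact_mod_cast Nat.prod_erase_Icc_one_sq_le_two_mul hj
        · exact_mod_cast prod_pos hD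
  rw [Lagrange.eval_basis, abs_prod, hsplit, prod_insert (by simp [E])]
  calc _ = 1 / (m * (j : ℝ) ^ 2) *
        ∏ i ∈ E, |1 - m * (i : ℝ) ^ 2| / |m * (j : ℝ) ^ 2 - m * (i : ℝ) ^ 2| := by
        simp [abs_div]
    _ ≤ 1 / (m * j ^ 2) * 2 := by gcongr
    _ = _ := by ring

theorem abs_eval_one_sub_eval_zero_le_of_sq_nodes (p : ℝ[X]) {m : ℕ} (hm : 1 ≤ m)
    (hnodes : ∀ i ≤ p.natDegree, |p.eval (m * (i : ℝ) ^ 2) - p.eval 0| ≤ 1) :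
    |p.eval 1 - p.eval 0| ≤ 4 / m := by
  set d := p.natDegree
  set v : ℕ → ℝ := fun i => m * (i : ℝ) ^ 2
  have hvs : Set.InjOn v (range (d + 1)) := by
    intro a _ b _ hab
    have hm0 : (m : ℝ) ≠ 0 := by positivity
    have : (a : ℝ) ^ 2 = (b : ℝ) ^ 2 := mul_left_cancel₀ hm0 hab
    exact_mod_cast (pow_left_inj₀ a.cast_nonneg b.cast_nonneg two_ne_zero).1 this
  have hdeg : p.degree < #(range (d + 1)) := by
    rw [card_range]; exact degree_le_natDegree.trans_lt (by exact_mod_cast d.lt_succ_self)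
  have hsum : ∑ i ∈ range d, (((i + 1 : ℕ) : ℝ) ^ 2)⁻¹ ≤ 2 := by
    have := sum_Ioo_inv_sq_le (α := ℝ) 0 (d + 1)
    rw [← Ico_add_one_left_eq_Ioo, sum_Ico_eq_sum_range] at this
    simpa [add_comm] using this
  rw [Lagrange.eval_sub_eq_sum hvs ⟨0, by simp⟩ hdeg, sum_range_succ']
  simp only [v, Nat.cast_zero, zero_pow two_ne_zero, mul_zero, sub_self, zero_mul, add_zero]
  have hterm : ∀ i ∈ range d, |(p.eval (m * ((i + 1 : ℕ) : ℝ) ^ 2) - p.eval 0) *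
      (Lagrange.basis (range (d + 1)) v (i + 1)).eval 1| ≤
        2 / (m * ((i + 1 : ℕ) : ℝ) ^ 2) := by
    intro i hi
    have hi : i + 1 ∈ Icc 1 d := by simp only [mem_range, mem_Icc] at hi ⊢; omega
    rw [abs_mul, ← one_mul (2 / _)]
    exact mul_le_mul (hnodes _ (mem_Icc.1 hi).2) (abs_eval_one_basis_sq_nodes_le hm hi)
      (abs_nonneg _) zero_le_one
  calc _ ≤ ∑ i ∈ range d, 2 / (m * ((i + 1 : ℕ) : ℝ) ^ 2) :=
        (abs_sum_le_sum_abs _ _).trans (sum_le_sum hterm)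
    _ = 2 / m * ∑ i ∈ range d, (((i + 1 : ℕ) : ℝ) ^ 2)⁻¹ := by
        rw [mul_sum]; exact sum_congr rfl fun i _ => by ring
    _ ≤ 2 / m * 2 := by gcongr
    _ = 4 / m := by ring

theorem mul_le_add_mul_natDegree_sq {ε : ℝ} (hε : 0 < ε) {N : ℕ} {p : ℝ[X]}
    (hbound : ∀ i : ℕ, i ≤ N → 0 ≤ p.eval (i : ℝ) ∧ p.eval (i : ℝ) ≤ 1)
    (hgap : ε ≤ |p.eval 1 - p.eval 0|) :
    ε * N ≤ (ε + 4) * p.natDegree ^ 2 := by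
  set d := p.natDegree
  have hd : 0 < d := by
    refine Nat.pos_of_ne_zero fun h => ?_
    obtain ⟨a, rfl⟩ := natDegree_eq_zero.1 h
    simp only [eval_C, sub_self, abs_zero] at hgap
    linarith
  rcases lt_or_ge N (d ^ 2) with hN | hN
  · have : (N : ℝ) ≤ d ^ 2 := by exact_mod_cast hN.le
    nlinarith
  set m := N / d ^ 2
  have hm : 1 ≤ m := Nat.div_pos hN (by positivity)
  have hnodes : ∀ i ≤ d, |p.eval (m * (i : ℝ) ^ 2) - p.eval 0| ≤ 1 := by
    intro i hi
    have hiN : m * i ^ 2 ≤ N :=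
      (Nat.mul_le_mul_left m (Nat.pow_le_pow_left hi 2)).trans (Nat.div_mul_le_self N _)
    have h1 := hbound _ hiN
    have h0 := hbound 0 (Nat.zero_le N)
    push_cast at h1 h0
    rw [abs_le]; constructor <;> linarith
  have hεm : ε * m ≤ 4 := by
    have := hgap.trans (abs_eval_one_sub_eval_zero_le_of_sq_nodes p hm hnodes)
    rwa [le_div_iff₀ (by positivity)] at this
  have hNm : (N : ℝ) < d ^ 2 * (m + 1) := by exact_mod_cast Nat.lt_mul_div_succ N (by positivity)
  nlinarith

/-- Paturi's lemma: For every `ε > 0` there is `c > 0` such that for all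
`N ≥ 1`: any real univariate polynomial `q̂` with `0 ≤ q̂(i) ≤ 1` for every integer
`0 ≤ i ≤ N` and `|q̂(1) − q̂(0)| ≥ ε` has degree at least `c·√N`. -/
theorem stmt8 (ε : ℝ) (hε : 0 < ε) :
    ∃ c : ℝ, 0 < c ∧
      ∀ (N : ℕ) (_ : 1 ≤ N) (qhat : Polynomial ℝ),
        (∀ i : ℕ, i ≤ N → 0 ≤ qhat.eval (i : ℝ) ∧ qhat.eval (i : ℝ) ≤ 1) →
        ε ≤ |qhat.eval 1 - qhat.eval 0| →
        c * Real.sqrt (N : ℝ) ≤ (qhat.natDegree : ℝ) := by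
  refine ⟨Real.sqrt (ε / (ε + 4)), by positivity, fun N _ p hbound hgap => ?_⟩
  have h := mul_le_add_mul_natDegree_sq hε hbound hgap
  rw [← Real.sqrt_mul (by positivity), ← Real.sqrt_sq (Nat.cast_nonneg p.natDegree)]
  refine Real.sqrt_le_sqrt ?_
  rw [div_mul_eq_mul_div, div_le_iff₀ (by positivity)]
  linarith
end
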